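/- Let α, β, ω > 0 and let G : ℝ → ℝ be continuous, 2π-periodic with |G| ≤ M. Define the operator T on the space of continuous 2π-periodic functions by (Tφ)(θ) = (-ω⁻¹/(1 - e^{-2παω⁻¹})) ∫₀^{2π} e^{αω⁻¹(s-2π)} [G(s + θ) + μ h₁(μ φ(s+θ))·G(s+θ)] ds, where h₁ : ℝ → ℝ is Lipschitz with Lipschitz constant ℓ and h₁(0) = 0. Then for μ small enough, T maps the ball of radius 2M/α into itself and is a contraction with constant ≤ K μ² for some constant K; hence T has a unique fixed point φ with ‖φ‖_∞ ≤ 2M/α. -/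

import Mathlib

open Real Set MeasureTheory intervalIntegral

lemma stmt17_exp_int (a : ℝ) (ha : 0 < a) :
    ∫ s in (0:ℝ)..(2 * π), Real.exp (a * (s - 2 * π))
      = (1 - Real.exp (-(2 * π * a))) / a := by
  have h1 : (∫ s in (0:ℝ)..(2 * π), Real.exp (a * (s - 2 * π)))
      = ∫ s in (0 - 2*π)..(2*π - 2*π), Real.exp (a * s) := by
    rw [← intervalIntegral.integral_comp_sub_right (fun s => Real.exp (a * s)) (2*π)]
  rw [h1]
  rw [integral_comp_mul_left (fun s => Real.exp s) (ne_of_gt ha)]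
  rw [integral_exp]
  rw [smul_eq_mul]
  have : a * (2*π - 2*π) = 0 := by ring
  rw [this, Real.exp_zero]
  field_simp
  ring_nf

lemma stmt17_core (α ω B : ℝ) (hα : 0 < α) (hω : 0 < ω) (hB : 0 ≤ B)
    (g : ℝ → ℝ) (hg : Continuous g) (hgb : ∀ s, |g s| ≤ B) :
    |(-ω⁻¹ / (1 - Real.exp (-2 * π * α * ω⁻¹))) *
      ∫ s in (0:ℝ)..(2 * π), Real.exp (α * ω⁻¹ * (s - 2 * π)) * g s| ≤ B / α := by
  set a := α * ω⁻¹ with ha_def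
  have ha : 0 < a := mul_pos hα (inv_pos.mpr hω)
  have hpi : (0:ℝ) < 2 * π := by positivity
  have hE : Real.exp (-(2 * π * a)) < 1 := by
    rw [Real.exp_lt_one_iff]; nlinarith
  have hEeq : Real.exp (-2 * π * α * ω⁻¹) = Real.exp (-(2 * π * a)) := by
    simp only [ha_def]; ring_nf
  have hint : |∫ s in (0:ℝ)..(2 * π), Real.exp (a * (s - 2 * π)) * g s|
      ≤ B * ((1 - Real.exp (-(2 * π * a))) / a) := by
    have hmono : |∫ s in (0:ℝ)..(2 * π), Real.exp (a * (s - 2 * π)) * g s|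
        ≤ ∫ s in (0:ℝ)..(2 * π), Real.exp (a * (s - 2 * π)) * B := by
      rw [← Real.norm_eq_abs]
      have hab : (0:ℝ) ≤ 2 * π := hpi.le
      refine (intervalIntegral.norm_integral_le_integral_norm hab).trans ?_
      apply intervalIntegral.integral_mono_on hab
      · exact (((Real.continuous_exp.comp (by continuity)).mul hg).norm).intervalIntegrable 0 (2*π)
      · exact ((Real.continuous_exp.comp (by continuity)).mul continuous_const).intervalIntegrable 0 (2*π)
      · intro t _
        rw [Real.norm_eq_abs, abs_mul, abs_of_pos (Real.exp_pos _)]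
        exact mul_le_mul_of_nonneg_left (hgb t) (Real.exp_pos _).le
    calc |∫ s in (0:ℝ)..(2 * π), Real.exp (a * (s - 2 * π)) * g s|
        ≤ ∫ s in (0:ℝ)..(2 * π), Real.exp (a * (s - 2 * π)) * B := hmono
      _ = B * ((1 - Real.exp (-(2 * π * a))) / a) := by
          rw [intervalIntegral.integral_mul_const, stmt17_exp_int a ha]
          ring
  rw [abs_mul, hEeq]
  have h1E : 0 < 1 - Real.exp (-(2 * π * a)) := by linarith
  have hc : |(-ω⁻¹ / (1 - Real.exp (-(2 * π * a))))| = ω⁻¹ / (1 - Real.exp (-(2 * π * a))) := by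
    rw [abs_div, abs_neg, abs_of_pos (inv_pos.mpr hω), abs_of_pos h1E]
  rw [hc]
  calc ω⁻¹ / (1 - Real.exp (-(2 * π * a))) *
        |∫ s in (0:ℝ)..(2 * π), Real.exp (a * (s - 2 * π)) * g s|
      ≤ ω⁻¹ / (1 - Real.exp (-(2 * π * a))) * (B * ((1 - Real.exp (-(2 * π * a))) / a)) := by
        apply mul_le_mul_of_nonneg_left hint; positivity
    _ = B / α := by
        have hne : (1:ℝ) - Real.exp (-(2 * π * a)) ≠ 0 := ne_of_gt h1E
        have e2 : ω⁻¹ / a = 1 / α := by rw [ha_def]; field_simp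
        calc ω⁻¹ / (1 - Real.exp (-(2 * π * a))) *
              (B * ((1 - Real.exp (-(2 * π * a))) / a))
            = B * ω⁻¹ * a⁻¹ *
                ((1 - Real.exp (-(2 * π * a))) * (1 - Real.exp (-(2 * π * a)))⁻¹) := by ring
          _ = B * (ω⁻¹ / a) := by rw [mul_inv_cancel₀ hne, mul_one]; ring
          _ = B / α := by rw [e2]; ring

/-- The contraction-mapping step in the proof of Proposition 4.3: for μ small the
operator `T` preserves the ball of radius `2M/α` in the space of continuous 2π-periodic
functions, contracts with constant `≤ Kμ²`, and has a unique fixed point there. -/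
theorem stmt17 (α β ω M ℓ : ℝ) (hα : 0 < α) (hβ : 0 < β) (hω : 0 < ω) (hM : 0 < M)
    (hℓ : 0 ≤ ℓ)
    (G : ℝ → ℝ) (hG : Continuous G) (hGp : ∀ θ, G (θ + 2 * π) = G θ)
    (hGb : ∀ θ, |G θ| ≤ M)
    (h₁ : ℝ → ℝ) (hh₁ : LipschitzWith (Real.toNNReal ℓ) h₁) (hh₁0 : h₁ 0 = 0) :
    ∃ K : ℝ, 0 < K ∧ ∃ μ₀ : ℝ, 0 < μ₀ ∧ ∀ μ : ℝ, 0 < μ → μ ≤ μ₀ →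
      let T : (ℝ → ℝ) → (ℝ → ℝ) := fun φ θ =>
        (-ω⁻¹ / (1 - Real.exp (-2 * π * α * ω⁻¹))) *
          ∫ s in (0:ℝ)..(2 * π), Real.exp (α * ω⁻¹ * (s - 2 * π)) *
            (G (s + θ) + μ * h₁ (μ * φ (s + θ)) * G (s + θ))
      (∀ φ : ℝ → ℝ, Continuous φ → (∀ θ, φ (θ + 2 * π) = φ θ) →
          (∀ θ, |φ θ| ≤ 2 * M / α) →
        Continuous (T φ) ∧ (∀ θ, T φ (θ + 2 * π) = T φ θ) ∧ ∀ θ, |T φ θ| ≤ 2 * M / α) ∧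
      (∀ φ₁ φ₂ : ℝ → ℝ, Continuous φ₁ → Continuous φ₂ →
          (∀ θ, |φ₁ θ| ≤ 2 * M / α) → (∀ θ, |φ₂ θ| ≤ 2 * M / α) →
          ∀ d : ℝ, 0 ≤ d → (∀ θ, |φ₁ θ - φ₂ θ| ≤ d) →
          ∀ θ, |T φ₁ θ - T φ₂ θ| ≤ K * μ ^ 2 * d) ∧
      (∃ φ : ℝ → ℝ, Continuous φ ∧ (∀ θ, φ (θ + 2 * π) = φ θ) ∧
        (∀ θ, |φ θ| ≤ 2 * M / α) ∧ (∀ θ, T φ θ = φ θ) ∧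
        ∀ φ' : ℝ → ℝ, Continuous φ' → (∀ θ, φ' (θ + 2 * π) = φ' θ) →
          (∀ θ, |φ' θ| ≤ 2 * M / α) → (∀ θ, T φ' θ = φ' θ) → φ' = φ) := by
  have hh₁c : Continuous h₁ := hh₁.continuous
  have hh₁lip : ∀ x y : ℝ, |h₁ x - h₁ y| ≤ ℓ * |x - y| := by
    intro x y
    have := hh₁.dist_le_mul x y
    rwa [Real.dist_eq, Real.dist_eq, Real.coe_toNNReal _ hℓ] at this
  have hh₁abs : ∀ x : ℝ, |h₁ x| ≤ ℓ * |x| := by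
    intro x; simpa [hh₁0] using hh₁lip x 0
  have hb2 : (0:ℝ) ≤ 2 * M / α := by positivity
  refine ⟨(ℓ * M + 1) / α, by positivity,
    min (Real.sqrt (α / (2 * ℓ * M + 1))) (Real.sqrt (α / (2 * (ℓ * M + 1)))), ?_, ?_⟩
  · apply lt_min <;> exact Real.sqrt_pos.mpr (by positivity)
  intro μ hμ hμle
  intro T
  -- basic smallness facts
  have hsq : ∀ x : ℝ, 0 < x → μ ≤ Real.sqrt (α / x) → μ ^ 2 * x ≤ α := by
    intro x hx hle
    have h1 : μ ^ 2 ≤ α / x := by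
      have := Real.sq_sqrt (show (0:ℝ) ≤ α / x by positivity)
      nlinarith [Real.sqrt_nonneg (α / x)]
    calc μ ^ 2 * x ≤ (α / x) * x := by exact mul_le_mul_of_nonneg_right h1 hx.le
      _ = α := by field_simp
  have hball : μ ^ 2 * (2 * ℓ * M + 1) ≤ α :=
    hsq _ (by positivity) (hμle.trans (min_le_left _ _))
  have hcontr : μ ^ 2 * (2 * (ℓ * M + 1)) ≤ α :=
    hsq _ (by positivity) (hμle.trans (min_le_right _ _))
  have hball' : μ ^ 2 * (2 * ℓ * M) ≤ α := by nlinarith [sq_nonneg μ]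
  have hKμ : (ℓ * M + 1) / α * μ ^ 2 ≤ 1 / 2 := by
    rw [div_mul_eq_mul_div, div_le_div_iff₀ hα (by norm_num)]
    nlinarith
  -- the main mapping property
  have hmain : ∀ φ : ℝ → ℝ, Continuous φ → (∀ θ, φ (θ + 2 * π) = φ θ) →
      (∀ θ, |φ θ| ≤ 2 * M / α) →
      Continuous (T φ) ∧ (∀ θ, T φ (θ + 2 * π) = T φ θ) ∧ ∀ θ, |T φ θ| ≤ 2 * M / α := by
    intro φ hφ hφp hφb
    have hadd : Continuous fun p : ℝ × ℝ => p.2 + p.1 := continuous_snd.add continuous_fst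
    have haddθ : ∀ θ : ℝ, Continuous fun s : ℝ => s + θ :=
      fun θ => continuous_id.add continuous_const
    have hFc : Continuous (Function.uncurry fun (θ s : ℝ) =>
        Real.exp (α * ω⁻¹ * (s - 2 * π)) *
          (G (s + θ) + μ * h₁ (μ * φ (s + θ)) * G (s + θ))) := by
      apply Continuous.mul
      · exact Real.continuous_exp.comp
          (continuous_const.mul (continuous_snd.sub continuous_const))
      · exact (hG.comp hadd).add
          (((continuous_const.mul (hh₁c.comp (continuous_const.mul (hφ.comp hadd))))).mul
            (hG.comp hadd))
    refine ⟨?_, ?_, ?_⟩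
    · exact continuous_const.mul
        (intervalIntegral.continuous_parametric_intervalIntegral_of_continuous' hFc 0 (2 * π))
    · intro θ
      show _ * _ = _ * _
      congr 1
      apply intervalIntegral.integral_congr
      intro s _
      beta_reduce
      have h : s + (θ + 2 * π) = (s + θ) + 2 * π := by ring
      rw [h, hGp, hφp]
    · intro θ
      have key : μ * (ℓ * (μ * (2 * M / α))) * M ≤ M := by
        have h : μ * (ℓ * (μ * (2 * M / α))) * M = (μ ^ 2 * (2 * ℓ * M)) * (M / α) := by
          ring
        rw [h]
        calc (μ ^ 2 * (2 * ℓ * M)) * (M / α) ≤ α * (M / α) :=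
              mul_le_mul_of_nonneg_right hball' (by positivity)
          _ = M := by field_simp
      have hgb : ∀ s : ℝ, |G (s + θ) + μ * h₁ (μ * φ (s + θ)) * G (s + θ)| ≤ 2 * M := by
        intro s
        have h1 : |μ * h₁ (μ * φ (s + θ)) * G (s + θ)| ≤ μ * (ℓ * (μ * (2 * M / α))) * M := by
          rw [abs_mul, abs_mul, abs_of_pos hμ]
          have e1 : |h₁ (μ * φ (s + θ))| ≤ ℓ * (μ * (2 * M / α)) := by
            refine (hh₁abs _).trans ?_
            rw [abs_mul, abs_of_pos hμ]
            exact mul_le_mul_of_nonneg_left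
              (mul_le_mul_of_nonneg_left (hφb _) hμ.le) hℓ
          exact mul_le_mul (mul_le_mul_of_nonneg_left e1 hμ.le) (hGb _) (abs_nonneg _)
            (by positivity)
        calc |G (s + θ) + μ * h₁ (μ * φ (s + θ)) * G (s + θ)|
            ≤ |G (s + θ)| + |μ * h₁ (μ * φ (s + θ)) * G (s + θ)| := abs_add_le _ _
          _ ≤ M + M := add_le_add ((hGb _).trans le_rfl) (h1.trans key)
          _ = 2 * M := by ring
      have hcφ : Continuous fun s => G (s + θ) + μ * h₁ (μ * φ (s + θ)) * G (s + θ) :=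
        (hG.comp (haddθ θ)).add
          ((continuous_const.mul (hh₁c.comp (continuous_const.mul (hφ.comp (haddθ θ))))).mul
            (hG.comp (haddθ θ)))
      exact stmt17_core α ω (2 * M) hα hω (by positivity)
        (fun s => G (s + θ) + μ * h₁ (μ * φ (s + θ)) * G (s + θ)) hcφ hgb
  -- the contraction estimate
  have hcontract : ∀ φ₁ φ₂ : ℝ → ℝ, Continuous φ₁ → Continuous φ₂ →
      (∀ θ, |φ₁ θ| ≤ 2 * M / α) → (∀ θ, |φ₂ θ| ≤ 2 * M / α) →
      ∀ d : ℝ, 0 ≤ d → (∀ θ, |φ₁ θ - φ₂ θ| ≤ d) →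
      ∀ θ, |T φ₁ θ - T φ₂ θ| ≤ (ℓ * M + 1) / α * μ ^ 2 * d := by
    intro φ₁ φ₂ hφ₁ hφ₂ hb₁ hb₂ d hd hdiff θ
    have haddθ : Continuous fun s : ℝ => s + θ := continuous_id.add continuous_const
    have hexp : Continuous fun s : ℝ => Real.exp (α * ω⁻¹ * (s - 2 * π)) :=
      Real.continuous_exp.comp (continuous_const.mul (continuous_id.sub continuous_const))
    have hc1 : Continuous fun s => G (s + θ) + μ * h₁ (μ * φ₁ (s + θ)) * G (s + θ) :=
      (hG.comp haddθ).add
        ((continuous_const.mul (hh₁c.comp (continuous_const.mul (hφ₁.comp haddθ)))).mul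
          (hG.comp haddθ))
    have hc2 : Continuous fun s => G (s + θ) + μ * h₁ (μ * φ₂ (s + θ)) * G (s + θ) :=
      (hG.comp haddθ).add
        ((continuous_const.mul (hh₁c.comp (continuous_const.mul (hφ₂.comp haddθ)))).mul
          (hG.comp haddθ))
    have int1 : IntervalIntegrable (fun s => Real.exp (α * ω⁻¹ * (s - 2 * π)) *
        (G (s + θ) + μ * h₁ (μ * φ₁ (s + θ)) * G (s + θ))) volume 0 (2 * π) :=
      Continuous.intervalIntegrable (hexp.mul hc1) _ _
    have int2 : IntervalIntegrable (fun s => Real.exp (α * ω⁻¹ * (s - 2 * π)) *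
        (G (s + θ) + μ * h₁ (μ * φ₂ (s + θ)) * G (s + θ))) volume 0 (2 * π) :=
      Continuous.intervalIntegrable (hexp.mul hc2) _ _
    have hsubeq : T φ₁ θ - T φ₂ θ =
        (-ω⁻¹ / (1 - Real.exp (-2 * π * α * ω⁻¹))) *
          ∫ s in (0:ℝ)..(2 * π), Real.exp (α * ω⁻¹ * (s - 2 * π)) *
            (μ * (h₁ (μ * φ₁ (s + θ)) - h₁ (μ * φ₂ (s + θ))) * G (s + θ)) := by
      show _ * _ - _ * _ = _
      rw [← mul_sub, ← intervalIntegral.integral_sub int1 int2]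
      congr 1
      apply intervalIntegral.integral_congr
      intro s _
      ring
    rw [hsubeq]
    have hgb : ∀ s : ℝ, |μ * (h₁ (μ * φ₁ (s + θ)) - h₁ (μ * φ₂ (s + θ))) * G (s + θ)|
        ≤ μ ^ 2 * ℓ * M * d := by
      intro s
      have e1 : |h₁ (μ * φ₁ (s + θ)) - h₁ (μ * φ₂ (s + θ))| ≤ ℓ * (μ * d) := by
        refine (hh₁lip _ _).trans ?_
        have : μ * φ₁ (s + θ) - μ * φ₂ (s + θ) = μ * (φ₁ (s + θ) - φ₂ (s + θ)) := by ring
        rw [this, abs_mul, abs_of_pos hμ]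
        exact mul_le_mul_of_nonneg_left
          (mul_le_mul_of_nonneg_left (hdiff _) hμ.le) hℓ
      calc |μ * (h₁ (μ * φ₁ (s + θ)) - h₁ (μ * φ₂ (s + θ))) * G (s + θ)|
          = μ * |h₁ (μ * φ₁ (s + θ)) - h₁ (μ * φ₂ (s + θ))| * |G (s + θ)| := by
            rw [abs_mul, abs_mul, abs_of_pos hμ]
        _ ≤ μ * (ℓ * (μ * d)) * M := by
            exact mul_le_mul (mul_le_mul_of_nonneg_left e1 hμ.le) (hGb _) (abs_nonneg _)
              (by positivity)
        _ = μ ^ 2 * ℓ * M * d := by ring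
    have hcd : Continuous fun s => μ * (h₁ (μ * φ₁ (s + θ)) - h₁ (μ * φ₂ (s + θ))) * G (s + θ) :=
      (continuous_const.mul
        ((hh₁c.comp (continuous_const.mul (hφ₁.comp haddθ))).sub
          (hh₁c.comp (continuous_const.mul (hφ₂.comp haddθ))))).mul (hG.comp haddθ)
    have hcore := stmt17_core α ω (μ ^ 2 * ℓ * M * d) hα hω (by positivity)
      (fun s => μ * (h₁ (μ * φ₁ (s + θ)) - h₁ (μ * φ₂ (s + θ))) * G (s + θ)) hcd hgb
    refine hcore.trans ?_
    calc μ ^ 2 * ℓ * M * d / α = (ℓ * M) * (μ ^ 2 * d) / α := by ring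
      _ ≤ (ℓ * M + 1) * (μ ^ 2 * d) / α := by
          gcongr
          linarith
      _ = (ℓ * M + 1) / α * μ ^ 2 * d := by ring
  refine ⟨hmain, hcontract, ?_⟩
  -- fixed-point argument in the space of bounded continuous functions
  classical
  set S : Set (BoundedContinuousFunction ℝ ℝ) := {f | (∀ θ, f (θ + 2 * π) = f θ) ∧ ‖f‖ ≤ 2 * M / α} with hS
  have hSclosed : IsClosed S := by
    have h1 : IsClosed {f : BoundedContinuousFunction ℝ ℝ | ∀ θ, f (θ + 2 * π) = f θ} := by
      have he : {f : BoundedContinuousFunction ℝ ℝ | ∀ θ, f (θ + 2 * π) = f θ}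
          = ⋂ θ : ℝ, {f : BoundedContinuousFunction ℝ ℝ | f (θ + 2 * π) = f θ} := by
        ext f; simp
      rw [he]
      exact isClosed_iInter fun θ => isClosed_eq
        (continuous_eval_const _)
        (continuous_eval_const _)
    have h2 : IsClosed {f : BoundedContinuousFunction ℝ ℝ | ‖f‖ ≤ 2 * M / α} :=
      isClosed_le continuous_norm continuous_const
    have he2 : S = {f : BoundedContinuousFunction ℝ ℝ | ∀ θ, f (θ + 2 * π) = f θ}
        ∩ {f : BoundedContinuousFunction ℝ ℝ | ‖f‖ ≤ 2 * M / α} := by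
      ext f; simp [hS, Set.mem_inter_iff]
    rw [he2]
    exact h1.inter h2
  haveI : CompleteSpace S := hSclosed.completeSpace_coe
  haveI : Nonempty S := ⟨⟨0, fun θ => rfl, by simpa using hb2⟩⟩
  have hballS : ∀ f : S, ∀ θ, |(f : BoundedContinuousFunction ℝ ℝ) θ| ≤ 2 * M / α := by
    intro f θ
    rw [← Real.norm_eq_abs]
    exact (BoundedContinuousFunction.norm_coe_le_norm (f : BoundedContinuousFunction ℝ ℝ) θ).trans f.2.2
  set F : S → S := fun f =>
    ⟨BoundedContinuousFunction.ofNormedAddCommGroup (T ⇑(f : BoundedContinuousFunction ℝ ℝ))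
        (hmain _ (f : BoundedContinuousFunction ℝ ℝ).continuous f.2.1 (hballS f)).1 (2 * M / α)
        (fun θ => by
          rw [Real.norm_eq_abs]
          exact (hmain _ (f : BoundedContinuousFunction ℝ ℝ).continuous f.2.1 (hballS f)).2.2 θ),
      fun θ => (hmain _ (f : BoundedContinuousFunction ℝ ℝ).continuous f.2.1 (hballS f)).2.1 θ,
      BoundedContinuousFunction.norm_ofNormedAddCommGroup_le _ hb2 _⟩ with hF
  have hFcoe : ∀ f : S, ∀ θ : ℝ, ((F f : BoundedContinuousFunction ℝ ℝ) : ℝ → ℝ) θ = T (⇑(f : BoundedContinuousFunction ℝ ℝ)) θ :=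
    fun f θ => rfl
  have hκ : ContractingWith (Real.toNNReal ((ℓ * M + 1) / α * μ ^ 2)) F := by
    constructor
    · have : ((Real.toNNReal ((ℓ * M + 1) / α * μ ^ 2)) : ℝ) < 1 := by
        rw [Real.coe_toNNReal _ (by positivity)]
        linarith
      exact_mod_cast this
    · apply LipschitzWith.of_dist_le_mul
      intro f g
      rw [Subtype.dist_eq]
      have hd : (0:ℝ) ≤ dist (f : BoundedContinuousFunction ℝ ℝ) (g : BoundedContinuousFunction ℝ ℝ) := dist_nonneg
      rw [BoundedContinuousFunction.dist_le (by positivity)]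
      intro θ
      rw [Real.dist_eq, hFcoe f θ, hFcoe g θ]
      have hest := hcontract (⇑(f : BoundedContinuousFunction ℝ ℝ)) (⇑(g : BoundedContinuousFunction ℝ ℝ))
        (f : BoundedContinuousFunction ℝ ℝ).continuous (g : BoundedContinuousFunction ℝ ℝ).continuous (hballS f) (hballS g)
        (dist (f : BoundedContinuousFunction ℝ ℝ) (g : BoundedContinuousFunction ℝ ℝ)) hd
        (fun θ => by
          rw [← Real.dist_eq]
          exact BoundedContinuousFunction.dist_coe_le_dist θ) θ
      refine hest.trans ?_
      rw [Real.coe_toNNReal _ (by positivity)]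
      rw [Subtype.dist_eq]
  set p : S := ContractingWith.fixedPoint F hκ with hp
  have hfix : F p = p := ContractingWith.fixedPoint_isFixedPt hκ
  refine ⟨⇑(p : BoundedContinuousFunction ℝ ℝ), (p : BoundedContinuousFunction ℝ ℝ).continuous, p.2.1, hballS p, ?_, ?_⟩
  · intro θ
    rw [← hFcoe p θ]
    exact congrArg (fun q : S => ((q : BoundedContinuousFunction ℝ ℝ) : ℝ → ℝ) θ) hfix
  · intro φ' hc' hp' hb' hfix'
    set f' : S := ⟨BoundedContinuousFunction.ofNormedAddCommGroup φ' hc' (2 * M / α)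
        (fun θ => by rw [Real.norm_eq_abs]; exact hb' θ),
      fun θ => hp' θ,
      BoundedContinuousFunction.norm_ofNormedAddCommGroup_le _ hb2 _⟩ with hf'
    have hfixf' : F f' = f' := by
      apply Subtype.ext
      apply BoundedContinuousFunction.ext
      intro θ
      exact hfix' θ
    have : f' = p := ContractingWith.fixedPoint_unique hκ hfixf'
    funext θ
    exact congrArg (fun q : S => ((q : BoundedContinuousFunction ℝ ℝ) : ℝ → ℝ) θ) this
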